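/- arXiv:math/0703384 — 11 statements merged into one kernel-verified Lean document; each statement's English description precedes it below -/
import Mathlib

section
/- If p is a complex polynomial of degree n ≥ 1 all of whose roots lie in the closed unit disk D = {z : |z| ≤ 1}, then sup_{|z|≤1} |p'(z)| ≥ (n/2) · sup_{|z|≤1} |p(z)|. -/
/-!
By the maximum modulus principle, `‖p‖` attains its maximum over the disk at some `z` with
`‖z‖ = 1`. There `p'(z) = p(z) · ∑ 1 / (z - r)` over the roots `r`, and for `‖z‖ = 1 ≥ ‖r‖` each
term satisfies `Re (z / (z - r)) ≥ 1 / 2`, because `2 Re (z (z - r)‾) - ‖z - r‖² = ‖z‖² - ‖r‖²`.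
Summing over the `n` roots gives `‖p'(z)‖ ≥ (n / 2) ‖p(z)‖`.
-/

open Polynomial Metric

theorem Complex.exists_mem_sphere_isGreatest_image_norm {E F : Type*} [NormedAddCommGroup E]
    [NormedSpace ℂ E] [FiniteDimensional ℂ E] [Nontrivial E] [NormedAddCommGroup F]
    [NormedSpace ℂ F] {f : E → F} {c : E} {R : ℝ} (hR : 0 < R) (hf : DiffContOnCl ℂ f (ball c R)) :
    ∃ z ∈ sphere c R, IsGreatest ((‖f ·‖) '' closedBall c R) ‖f z‖ := by
  obtain ⟨z, hz, hmax⟩ :=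
    Complex.exists_mem_frontier_isMaxOn_norm isBounded_ball (nonempty_ball.2 hR) hf
  rw [frontier_ball c hR.ne'] at hz
  rw [closure_ball c hR.ne'] at hmax
  exact ⟨z, hz, Set.mem_image_of_mem _ (sphere_subset_closedBall hz), Set.forall_mem_image.2 hmax⟩

theorem Complex.one_half_le_re_div_sub {z r : ℂ} (hz : ‖z‖ = 1) (hr : ‖r‖ ≤ 1) (hzr : z ≠ r) :
    1 / 2 ≤ (z / (z - r)).re := by
  have hz2 : normSq z = 1 := by rw [normSq_eq_norm_sq, hz, one_pow]
  have hr2 : normSq r ≤ 1 := by rw [normSq_eq_norm_sq]; nlinarith [norm_nonneg r]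
  have hzr2 : 0 < normSq (z - r) := normSq_pos.2 (sub_ne_zero.2 hzr)
  rw [div_re, ← add_div, le_div_iff₀ hzr2]
  simp only [normSq_apply, sub_re, sub_im] at *
  nlinarith

theorem natDegree_div_two_le_re_mul_sum_roots {p : ℂ[X]} (hroots : ∀ r, p.IsRoot r → ‖r‖ ≤ 1)
    {z : ℂ} (hz : ‖z‖ = 1) (hpz : p.eval z ≠ 0) :
    (p.natDegree / 2 : ℝ) ≤ (z * (p.roots.map fun r ↦ 1 / (z - r)).sum).re := by
  have hle : ∀ x ∈ p.roots.map fun r ↦ (z / (z - r)).re, 1 / 2 ≤ x := by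
    simp only [Multiset.mem_map, forall_exists_index, and_imp, forall_apply_eq_imp_iff₂]
    intro r hr
    have hroot := isRoot_of_mem_roots hr
    exact Complex.one_half_le_re_div_sub hz (hroots r hroot) (by rintro rfl; exact hpz hroot)
  calc (p.natDegree / 2 : ℝ) = (p.roots.map fun r ↦ (z / (z - r)).re).card • (1 / 2 : ℝ) := by
        rw [Multiset.card_map, IsAlgClosed.card_roots_eq_natDegree, nsmul_eq_mul]; ring
    _ ≤ (p.roots.map fun r ↦ (z / (z - r)).re).sum := Multiset.card_nsmul_le_sum hle
    _ = Complex.reAddGroupHom (p.roots.map fun r ↦ z * (1 / (z - r))).sum := by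
        rw [map_multiset_sum, Multiset.map_map]
        simp only [Function.comp_def, mul_one_div]
        rfl
    _ = (z * (p.roots.map fun r ↦ 1 / (z - r)).sum).re := by
        rw [Multiset.sum_map_mul_left]; rfl

theorem natDegree_div_two_mul_norm_eval_le_norm_eval_derivative {p : ℂ[X]}
    (hroots : ∀ r, p.IsRoot r → ‖r‖ ≤ 1) {z : ℂ} (hz : ‖z‖ = 1) :
    (p.natDegree / 2 : ℝ) * ‖p.eval z‖ ≤ ‖p.derivative.eval z‖ := by
  by_cases hpz : p.eval z = 0
  · simp [hpz]
  set S := (p.roots.map fun r ↦ 1 / (z - r)).sum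
  calc (p.natDegree / 2 : ℝ) * ‖p.eval z‖ ≤ (z * S).re * ‖p.eval z‖ := by
        gcongr; exact natDegree_div_two_le_re_mul_sum_roots hroots hz hpz
    _ ≤ ‖z * S‖ * ‖p.eval z‖ := by gcongr; exact Complex.re_le_norm _
    _ = ‖p.derivative.eval z‖ := by
        rw [(IsAlgClosed.splits p).eval_derivative_eq_eval_mul_sum hpz, norm_mul, norm_mul, hz,
          one_mul, mul_comm]

theorem turan_disk_general (n : ℕ) (p : Polynomial ℂ)
    (hdeg : p.natDegree = n)
    (hroots : ∀ z : ℂ, p.IsRoot z → z ∈ closedBall (0 : ℂ) 1) :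
    ((n : ℝ) / 2) * sSup ((fun z => ‖p.eval z‖) '' closedBall (0 : ℂ) 1)
      ≤ sSup ((fun z => ‖(Polynomial.derivative p).eval z‖) '' closedBall (0 : ℂ) 1) := by
  obtain ⟨z, hz, hmax⟩ :=
    Complex.exists_mem_sphere_isGreatest_image_norm (c := (0 : ℂ)) one_pos
      p.differentiable.diffContOnCl
  have hbdd : BddAbove ((fun z => ‖p.derivative.eval z‖) '' closedBall (0 : ℂ) 1) :=
    ((isCompact_closedBall 0 1).image (by fun_prop)).bddAbove
  rw [hmax.csSup_eq, ← hdeg]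
  calc (p.natDegree / 2 : ℝ) * ‖p.eval z‖ ≤ ‖p.derivative.eval z‖ :=
        natDegree_div_two_mul_norm_eval_le_norm_eval_derivative
          (fun r hr ↦ mem_closedBall_zero_iff.1 (hroots r hr)) (mem_sphere_zero_iff_norm.1 hz)
    _ ≤ _ := le_csSup hbdd ⟨z, sphere_subset_closedBall hz, rfl⟩

/-- Turán's inequality for the closed unit disk. -/
theorem turan_disk (n : ℕ) (hn : 1 ≤ n) (p : Polynomial ℂ)
    (hdeg : p.natDegree = n)
    (hroots : ∀ z : ℂ, p.IsRoot z → z ∈ closedBall (0 : ℂ) 1) :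
    ((n : ℝ) / 2) * sSup ((fun z => ‖p.eval z‖) '' closedBall (0 : ℂ) 1)
      ≤ sSup ((fun z => ‖(Polynomial.derivative p).eval z‖) '' closedBall (0 : ℂ) 1) :=
  turan_disk_general n p hdeg hroots
end

section
/- If p is a real polynomial of degree n ≥ 1 all of whose roots are real and lie in [−1,1], then sup_{x∈[−1,1]} |p'(x)| ≥ (√n / 6) · sup_{x∈[−1,1]} |p(x)|. -/
/-! Let `|p'| ≤ m` on `[-1, 1]`, `M = |p(ξ)| > 0` and `δ = M / (2m)`; since a root lies within
distance 2 of `ξ`, `δ ≤ 1`. By the mean value theorem `|p| ≥ M / 2` on an interval `J ∋ ξ` of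
length `δ`, so `J` contains no root and `p' / p = ∑ᵣ 1 / (y - r)` is bounded by `2m / M` on `J`.
But each `1 / (y - r)` decreases across `J` by at least `δ / 4`, all distances being at most 2,
so `n δ / 4 ≤ 4m / M`, i.e. `n M² ≤ 32 m²`; and `√32 < 6`. -/

open Polynomial Set

lemma exists_Icc_add_subset_Icc_and_mem {c d ξ δ : ℝ} (hξ : ξ ∈ Icc c d) (hδ : 0 ≤ δ)
    (hδd : δ ≤ d - c) : ∃ a, Icc a (a + δ) ⊆ Icc c d ∧ ξ ∈ Icc a (a + δ) := by
  refine ⟨min ξ (d - δ), Icc_subset_Icc ?_ ?_, min_le_left _ _, ?_⟩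
  · exact le_min hξ.1 (by linarith)
  · linarith [min_le_right ξ (d - δ)]
  · rcases min_choice ξ (d - δ) with h | h <;> rw [h] <;> linarith [hξ.2]

lemma div_four_le_one_div_sub_sub_one_div_sub {a b r : ℝ} (hab : a ≤ b) (hr : r ∉ Icc a b)
    (ha : a ∈ Icc (-1 : ℝ) 1) (hb : b ∈ Icc (-1 : ℝ) 1) (hrI : r ∈ Icc (-1 : ℝ) 1) :
    (b - a) / 4 ≤ 1 / (a - r) - 1 / (b - r) := by
  have hside : r < a ∨ b < r := (not_and_or.mp hr).imp not_le.mp not_le.mp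
  have hpos : 0 < (a - r) * (b - r) := by rcases hside with h | h <;> nlinarith
  have hle : (a - r) * (b - r) ≤ 4 := by
    rcases hside with h | h
    · nlinarith [ha.2, hb.2, hrI.1]
    · nlinarith [ha.1, hb.1, hrI.2]
  have hsub : 1 / (a - r) - 1 / (b - r) = (b - a) / ((a - r) * (b - r)) := by
    rw [div_sub_div _ _ (left_ne_zero_of_mul hpos.ne') (right_ne_zero_of_mul hpos.ne')]
    ring
  rw [hsub]
  gcongr

lemma card_mul_div_four_le_sum_one_div_sub {s : Multiset ℝ} {a b : ℝ} (hab : a ≤ b)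
    (ha : a ∈ Icc (-1 : ℝ) 1) (hb : b ∈ Icc (-1 : ℝ) 1)
    (hs : ∀ r ∈ s, r ∈ Icc (-1 : ℝ) 1 \ Icc a b) :
    s.card * ((b - a) / 4)
      ≤ (s.map fun r => 1 / (a - r)).sum - (s.map fun r => 1 / (b - r)).sum := by
  rw [← Multiset.sum_map_sub, ← nsmul_eq_mul,
    ← Multiset.card_map (fun r => 1 / (a - r) - 1 / (b - r))]
  refine Multiset.card_nsmul_le_sum ?_
  simp only [Multiset.mem_map]
  rintro _ ⟨r, hr, rfl⟩
  exact div_four_le_one_div_sub_sub_one_div_sub hab (hs r hr).2 ha hb (hs r hr).1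

lemma Polynomial.Splits.abs_sum_one_div_sub_roots_le {p : ℝ[X]} (hsplit : p.Splits) {y c m : ℝ}
    (hc : 0 < c) (hcy : c ≤ |p.eval y|) (hm : |p.derivative.eval y| ≤ m) :
    |(p.roots.map fun r => 1 / (y - r)).sum| ≤ m / c := by
  have hpy : p.eval y ≠ 0 := abs_pos.mp (hc.trans_le hcy)
  rw [hsplit.eval_derivative_eq_eval_mul_sum hpy, abs_mul] at hm
  rw [le_div_iff₀ hc]
  nlinarith [abs_nonneg (p.roots.map fun r => 1 / (y - r)).sum]

lemma Polynomial.abs_eval_sub_mul_le_abs_eval {p : ℝ[X]} {s : Set ℝ} (hs : Convex ℝ s) {m x y : ℝ}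
    (hm : ∀ z ∈ s, |p.derivative.eval z| ≤ m) (hx : x ∈ s) (hy : y ∈ s) :
    |p.eval x| - m * |x - y| ≤ |p.eval y| := by
  have h := hs.norm_image_sub_le_of_norm_hasDerivWithin_le
    (fun z _ => (p.hasDerivAt z).hasDerivWithinAt) hm hy hx
  rw [Real.norm_eq_abs, Real.norm_eq_abs] at h
  linarith [abs_sub_abs_le_abs_sub (p.eval x) (p.eval y)]

theorem Polynomial.card_roots_mul_sq_abs_eval_le {p : ℝ[X]} (hsplit : p.Splits)
    (hroots : ∀ r ∈ p.roots, r ∈ Icc (-1 : ℝ) 1) {ξ m : ℝ} (hξ : ξ ∈ Icc (-1 : ℝ) 1)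
    (hm : ∀ y ∈ Icc (-1 : ℝ) 1, |p.derivative.eval y| ≤ m) :
    p.roots.card * |p.eval ξ| ^ 2 ≤ 32 * m ^ 2 := by
  set M := |p.eval ξ|
  have hlip : ∀ y ∈ Icc (-1 : ℝ) 1, M - m * |ξ - y| ≤ |p.eval y| := fun y hy =>
    abs_eval_sub_mul_le_abs_eval (convex_Icc _ _) hm hξ hy
  rcases Multiset.empty_or_exists_mem p.roots with h0 | ⟨r₀, hr₀⟩
  · simp only [h0, Multiset.card_zero, Nat.cast_zero, zero_mul]
    positivity
  have hm0 : 0 ≤ m := (abs_nonneg _).trans (hm ξ hξ)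
  have hM2 : M ≤ 2 * m := by
    have h := hlip r₀ (hroots r₀ hr₀)
    rw [(mem_roots'.mp hr₀).2, abs_zero] at h
    obtain ⟨hr₀l, hr₀r⟩ := hroots r₀ hr₀
    have : |ξ - r₀| ≤ 2 := abs_le.mpr ⟨by linarith [hξ.1], by linarith [hξ.2]⟩
    nlinarith
  rcases (show 0 ≤ M from abs_nonneg _).eq_or_lt with hM0 | hMpos
  · rw [← hM0, zero_pow two_ne_zero, mul_zero]
    positivity
  have hmpos : 0 < m := by linarith
  set δ := M / (2 * m) with hδ
  have hδpos : 0 < δ := by positivity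
  obtain ⟨a, hsub, ⟨hξa, hξb⟩⟩ := exists_Icc_add_subset_Icc_and_mem hξ hδpos.le
    (by rw [hδ, div_le_iff₀ (by positivity)]; linarith)
  have hlarge : ∀ y ∈ Icc a (a + δ), M / 2 ≤ |p.eval y| := fun y hy => by
    have hdist : |ξ - y| ≤ δ := abs_le.mpr ⟨by linarith [hy.2], by linarith [hy.1]⟩
    have : m * δ = M / 2 := by rw [hδ]; field_simp
    nlinarith [hlip y (hsub hy)]
  have hfree : ∀ r ∈ p.roots, r ∈ Icc (-1 : ℝ) 1 \ Icc a (a + δ) := fun r hr =>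
    ⟨hroots r hr, fun hra => by
      have := hlarge r hra
      rw [(mem_roots'.mp hr).2, abs_zero] at this
      linarith⟩
  have hsum : ∀ y ∈ Icc a (a + δ), |(p.roots.map fun r => 1 / (y - r)).sum| ≤ m / (M / 2) :=
    fun y hy => hsplit.abs_sum_one_div_sub_roots_le (by positivity) (hlarge y hy) (hm y (hsub hy))
  have hgap := card_mul_div_four_le_sum_one_div_sub (by linarith)
    (hsub (left_mem_Icc.mpr (by linarith))) (hsub (right_mem_Icc.mpr (by linarith))) hfree
  have ha := abs_le.mp (hsum a (left_mem_Icc.mpr (by linarith)))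
  have hb := abs_le.mp (hsum (a + δ) (right_mem_Icc.mpr (by linarith)))
  have : (p.roots.card : ℝ) * (M / (8 * m)) ≤ 4 * m / M := by
    rw [hδ, add_sub_cancel_left] at hgap
    calc _ = (p.roots.card : ℝ) * (M / (2 * m) / 4) := by ring
      _ ≤ _ := hgap
      _ ≤ m / (M / 2) + m / (M / 2) := by linarith
      _ = _ := by field_simp; ring
  rw [mul_div_assoc', div_le_div_iff₀ (by positivity) hMpos] at this
  nlinarith

theorem turan_interval_general (n : ℕ) (p : Polynomial ℝ)
    (hdeg : p.natDegree = n)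
    (hsplit : p.Splits)
    (hroots : ∀ x : ℝ, p.IsRoot x → x ∈ Set.Icc (-1 : ℝ) 1) :
    (Real.sqrt n / 6) * sSup ((fun x => |p.eval x|) '' Set.Icc (-1 : ℝ) 1)
      ≤ sSup ((fun x => |(Polynomial.derivative p).eval x|) '' Set.Icc (-1 : ℝ) 1) := by
  obtain ⟨ξ, hξ, hmax⟩ := isCompact_Icc.exists_isMaxOn (nonempty_Icc.mpr (by norm_num))
    (p.continuous.abs.continuousOn (s := Icc (-1 : ℝ) 1))
  rw [(IsGreatest.csSup_eq ⟨mem_image_of_mem _ hξ, forall_mem_image.mpr hmax⟩ :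
    sSup ((fun x => |p.eval x|) '' Icc (-1 : ℝ) 1) = |p.eval ξ|)]
  set m := sSup ((fun x => |p.derivative.eval x|) '' Icc (-1 : ℝ) 1)
  have hm : ∀ y ∈ Icc (-1 : ℝ) 1, |p.derivative.eval y| ≤ m := fun y hy =>
    le_csSup (isCompact_Icc.bddAbove_image p.derivative.continuous.abs.continuousOn)
      (mem_image_of_mem _ hy)
  have hsq := card_roots_mul_sq_abs_eval_le hsplit (fun r hr => hroots r (mem_roots'.mp hr).2) hξ hm
  rw [← hsplit.natDegree_eq_card_roots, hdeg] at hsq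
  have hm0 : 0 ≤ m := (abs_nonneg _).trans (hm ξ hξ)
  suffices Real.sqrt n * |p.eval ξ| ≤ 6 * m by linarith
  refine le_of_pow_le_pow_left₀ two_ne_zero (by positivity) ?_
  rw [mul_pow, Real.sq_sqrt n.cast_nonneg]
  nlinarith

/-- Turán's inequality for the interval `[-1,1]`. -/
theorem turan_interval (n : ℕ) (hn : 1 ≤ n) (p : Polynomial ℝ)
    (hdeg : p.natDegree = n)
    (hsplit : p.Splits)
    (hroots : ∀ x : ℝ, p.IsRoot x → x ∈ Set.Icc (-1 : ℝ) 1) :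
    (Real.sqrt n / 6) * sSup ((fun x => |p.eval x|) '' Set.Icc (-1 : ℝ) 1)
      ≤ sSup ((fun x => |(Polynomial.derivative p).eval x|) '' Set.Icc (-1 : ℝ) 1) :=
  turan_interval_general n p hdeg hsplit hroots
end

section
/- For the polynomial p_n(x) = (1 − x²)^n of degree 2n on [−1,1], there is an absolute constant C such that sup_{x∈[−1,1]} |p_n'(x)| ≤ C √n · sup_{x∈[−1,1]} |p_n(x)| for all n ≥ 1; in particular the order √n in Turán's interval inequality cannot be improved. -/
open Polynomial

lemma aux_bern (n : ℕ) (hn : 1 ≤ n) {s : ℝ} (hs0 : 0 ≤ s) (hs1 : s ≤ 1) :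
    (n : ℝ) * (s * (1 - s) ^ (2 * (n - 1))) ≤ 1 := by
  set m : ℕ := 2 * (n - 1) with hm
  have h1s : (0:ℝ) ≤ 1 - s := by linarith
  have hb : 1 + (m : ℝ) * s ≤ (1 + s) ^ m := one_add_mul_le_pow (by linarith : (-2:ℝ) ≤ s) m
  have hn' : (n : ℝ) ≤ (m : ℝ) + 1 := by
    have : n ≤ m + 1 := by omega
    exact_mod_cast this
  have hns : (n:ℝ) * s ≤ 1 + (m:ℝ) * s := by nlinarith
  calc (n : ℝ) * (s * (1 - s) ^ m) = ((n:ℝ)*s) * (1-s)^m := by ring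
    _ ≤ (1 + (m:ℝ)*s) * (1-s)^m := mul_le_mul_of_nonneg_right hns (pow_nonneg h1s m)
    _ ≤ (1 + s)^m * (1-s)^m := mul_le_mul_of_nonneg_right hb (pow_nonneg h1s m)
    _ = (1 - s^2)^m := by rw [← mul_pow]; ring_nf
    _ ≤ 1 := pow_le_one₀ (by nlinarith) (by nlinarith)

lemma aux_eval (n : ℕ) (x : ℝ) :
    (Polynomial.derivative (((1 : Polynomial ℝ) - Polynomial.X ^ 2) ^ n)).eval x
      = (n : ℝ) * (1 - x^2)^(n-1) * (-(2*x)) := by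
  simp [Polynomial.derivative_pow]

lemma aux_deriv_bound (n : ℕ) (hn : 1 ≤ n) {x : ℝ} (hx : x ∈ Set.Icc (-1:ℝ) 1) :
    |(Polynomial.derivative (((1 : Polynomial ℝ) - Polynomial.X ^ 2) ^ n)).eval x|
      ≤ 2 * Real.sqrt n := by
  obtain ⟨hx1, hx2⟩ := hx
  have hx2' : x^2 ≤ 1 := by nlinarith
  have h1x : (0:ℝ) ≤ 1 - x^2 := by linarith
  rw [aux_eval]
  have key : (n:ℝ) * (x^2 * (1 - x^2) ^ (2 * (n-1))) ≤ 1 :=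
    aux_bern n hn (sq_nonneg x) hx2'
  have hsq : ((n : ℝ) * (1 - x^2)^(n-1) * (-(2*x)))^2 ≤ (2 * Real.sqrt n)^2 := by
    have hn0 : (0:ℝ) ≤ (n:ℝ) := Nat.cast_nonneg n
    have hsqn : Real.sqrt n ^ 2 = (n:ℝ) := Real.sq_sqrt hn0
    have hexp : ((1 - x^2)^(n-1))^2 = (1 - x^2)^(2*(n-1)) := by
      rw [← pow_mul]; ring_nf
    calc ((n : ℝ) * (1 - x^2)^(n-1) * (-(2*x)))^2
        = 4 * (n:ℝ) * ((n:ℝ) * (x^2 * (1 - x^2)^(2*(n-1)))) := by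
          rw [← hexp]; ring
      _ ≤ 4 * (n:ℝ) * 1 := by
          apply mul_le_mul_of_nonneg_left key (by positivity)
      _ = (2 * Real.sqrt n)^2 := by rw [mul_pow, hsqn]; ring
  have h2 : (0:ℝ) ≤ 2 * Real.sqrt n := by positivity
  calc |(n : ℝ) * (1 - x^2)^(n-1) * (-(2*x))|
      = Real.sqrt (((n : ℝ) * (1 - x^2)^(n-1) * (-(2*x)))^2) := (Real.sqrt_sq_eq_abs _).symm
    _ ≤ Real.sqrt ((2 * Real.sqrt n)^2) := Real.sqrt_le_sqrt hsq
    _ = 2 * Real.sqrt n := Real.sqrt_sq h2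

/-- For `pₙ(x) = (1 - x²)ⁿ`, the Markov factor is at most `C √n`:
the order `√n` in Turán's interval inequality is sharp. -/
theorem turan_interval_sharp :
    ∃ C : ℝ, 0 < C ∧ ∀ n : ℕ, 1 ≤ n →
      sSup ((fun x => |(Polynomial.derivative (((1 : Polynomial ℝ) - Polynomial.X ^ 2) ^ n)).eval x|)
          '' Set.Icc (-1 : ℝ) 1)
        ≤ C * Real.sqrt n *
          sSup ((fun x => |((((1 : Polynomial ℝ) - Polynomial.X ^ 2) ^ n)).eval x|)
          '' Set.Icc (-1 : ℝ) 1) := by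
  refine ⟨2, by norm_num, fun n hn => ?_⟩
  have hmem : (0:ℝ) ∈ Set.Icc (-1:ℝ) 1 := by constructor <;> norm_num
  have hne : (Set.Icc (-1:ℝ) 1).Nonempty := ⟨0, hmem⟩
  -- sSup of |p| ≥ 1
  have hbdd : BddAbove ((fun x => |((((1 : Polynomial ℝ) - Polynomial.X ^ 2) ^ n)).eval x|)
      '' Set.Icc (-1 : ℝ) 1) := by
    refine ⟨1, ?_⟩
    rintro y ⟨x, ⟨hx1, hx2⟩, rfl⟩
    simp only [eval_pow, eval_sub, eval_one, eval_X]
    rw [abs_pow]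
    apply pow_le_one₀ (abs_nonneg _)
    rw [abs_le]
    constructor <;> nlinarith
  have h1 : (1:ℝ) ≤ sSup ((fun x => |((((1 : Polynomial ℝ) - Polynomial.X ^ 2) ^ n)).eval x|)
      '' Set.Icc (-1 : ℝ) 1) := by
    apply le_csSup hbdd
    refine ⟨0, hmem, ?_⟩
    simp
  have hd : sSup ((fun x => |(Polynomial.derivative (((1 : Polynomial ℝ) - Polynomial.X ^ 2) ^ n)).eval x|)
      '' Set.Icc (-1 : ℝ) 1) ≤ 2 * Real.sqrt n := by
    apply csSup_le (hne.image _)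
    rintro y ⟨x, hx, rfl⟩
    exact aux_deriv_bound n hn hx
  have hpos : (0:ℝ) ≤ 2 * Real.sqrt n := by positivity
  exact hd.trans (le_mul_of_one_le_right hpos h1)
end

section
/- Let K ⊂ ℂ be compact, z ∈ K, and suppose there is a closed disk D_R of radius R > 0 with z on its boundary circle and K ⊆ D_R. Then for every polynomial p of degree n ≥ 1 all of whose roots lie in K, |p'(z)| ≥ (n / (2R)) · |p(z)|. -/
/-!
By the logarithmic derivative, `p'(z) / p(z) = ∑ 1 / (z - w)` over the roots `w` of `p`.
For `w` in the disk and `z` on its boundary circle, `|w - c| ≤ |z - c|` expands to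
`|z - w|² ≤ 2 Re((z - c) conj (z - w))`, i.e. `Re((z - c) / (z - w)) ≥ 1/2`. Summing over the
`n` roots gives `n / 2 ≤ Re((z - c) p'(z) / p(z)) ≤ R |p'(z) / p(z)|`.
-/

open Polynomial Metric

lemma one_half_le_re_div_sub_of_dist_le {c z w : ℂ} {R : ℝ} (hz : dist z c = R)
    (hw : dist w c ≤ R) (hzw : z ≠ w) : 1 / 2 ≤ ((z - c) / (z - w)).re := by
  have hpos : 0 < Complex.normSq (z - w) := Complex.normSq_pos.2 (sub_ne_zero.2 hzw)
  have hnormSq : Complex.normSq (w - c) ≤ Complex.normSq (z - c) := by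
    rw [Complex.normSq_eq_norm_sq, Complex.normSq_eq_norm_sq, ← Complex.dist_eq, ← Complex.dist_eq]
    exact pow_le_pow_left₀ dist_nonneg (hz ▸ hw) 2
  have hinner : Complex.normSq (z - w) ≤
      2 * ((z - c).re * (z - w).re + (z - c).im * (z - w).im) := by
    simp only [Complex.normSq_apply, Complex.sub_re, Complex.sub_im] at hnormSq ⊢
    nlinarith
  rw [Complex.div_re, ← add_div, le_div_iff₀ hpos]
  linarith

lemma card_le_two_mul_norm_sum_inv_sub {c z : ℂ} {R : ℝ} {s : Multiset ℂ}
    (hz : dist z c = R) (hs : ∀ w ∈ s, dist w c ≤ R) (hzs : z ∉ s) :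
    (Multiset.card s : ℝ) ≤ 2 * R * ‖(s.map fun w ↦ 1 / (z - w)).sum‖ := by
  have hre : (Multiset.card s : ℝ) / 2 ≤ ((z - c) * (s.map fun w ↦ 1 / (z - w)).sum).re := by
    rw [← Multiset.sum_map_mul_left, ← Complex.coe_reAddGroupHom, map_multiset_sum,
      Multiset.map_map]
    calc (Multiset.card s : ℝ) / 2 = (s.map fun _ ↦ (1 / 2 : ℝ)).sum := by
          simp [div_eq_mul_inv]
      _ ≤ _ := Multiset.sum_map_le_sum_map _ _ fun w hw ↦ by
          simpa only [Function.comp_apply, Complex.coe_reAddGroupHom, mul_one_div] using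
            one_half_le_re_div_sub_of_dist_le hz (hs w hw) (ne_of_mem_of_not_mem hw hzs).symm
  calc (Multiset.card s : ℝ) = 2 * (Multiset.card s / 2) := by ring
    _ ≤ 2 * ((z - c) * (s.map fun w ↦ 1 / (z - w)).sum).re := by gcongr
    _ ≤ 2 * ‖(z - c) * (s.map fun w ↦ 1 / (z - w)).sum‖ := by gcongr; exact Complex.re_le_norm _
    _ = 2 * R * ‖(s.map fun w ↦ 1 / (z - w)).sum‖ := by
      rw [norm_mul, ← Complex.dist_eq, hz, mul_assoc]

theorem turan_pointwise_general (K : Set ℂ) (z : ℂ)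
    (c : ℂ) (R : ℝ) (hR : 0 < R) (hzc : dist z c = R) (hKD : K ⊆ closedBall c R)
    (n : ℕ) (p : Polynomial ℂ) (hdeg : p.natDegree = n)
    (hroots : ∀ w : ℂ, p.IsRoot w → w ∈ K) :
    ((n : ℝ) / (2 * R)) * ‖p.eval z‖
      ≤ ‖(Polynomial.derivative p).eval z‖ := by
  by_cases hpz : p.eval z = 0
  · simp [hpz]
  have hsplit := IsAlgClosed.splits p
  have hcard : Multiset.card p.roots = n := hdeg ▸ hsplit.natDegree_eq_card_roots.symm
  have hbound := card_le_two_mul_norm_sum_inv_sub (s := p.roots) hzc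
    (fun w hw ↦ hKD (hroots w (isRoot_of_mem_roots hw))) (fun h ↦ hpz (isRoot_of_mem_roots h))
  rw [hcard, ← div_le_iff₀' (by positivity)] at hbound
  rw [hsplit.eval_derivative_eq_eval_mul_sum hpz, norm_mul, mul_comm]
  gcongr

/-- Turán / Levenberg–Poletsky pointwise lemma: if `z ∈ K` lies on the boundary
circle of a closed disk of radius `R` containing `K`, then
`|p'(z)| ≥ (n/(2R)) |p(z)|` for every degree-`n` polynomial with all roots in `K`. -/
theorem turan_pointwise (K : Set ℂ) (hK : IsCompact K) (z : ℂ) (hz : z ∈ K)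
    (c : ℂ) (R : ℝ) (hR : 0 < R) (hzc : dist z c = R) (hKD : K ⊆ closedBall c R)
    (n : ℕ) (hn : 1 ≤ n) (p : Polynomial ℂ) (hdeg : p.natDegree = n)
    (hroots : ∀ w : ℂ, p.IsRoot w → w ∈ K) :
    ((n : ℝ) / (2 * R)) * ‖p.eval z‖
      ≤ ‖(Polynomial.derivative p).eval z‖ :=
  turan_pointwise_general K z c R hR hzc hKD n p hdeg hroots
end

section
/- If w is any point in a closed disk D_R of radius R and z is a point on the boundary circle of D_R with z ≠ w, then Re( ((z − c)/R) · (1 / (z − w)) ) ≥ 1/(2R), where c is the center of D_R. -/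
open Metric

/-!
Put `u = z - c` and `v = w - c`, so `‖v‖ ≤ ‖u‖ = R` and `z - w = u - v`. Expanding the square,
`2 ⟪u, u - v⟫ - ‖u - v‖² = ‖u‖² - ‖v‖² ≥ 0`, and since `Re (u / d) = ⟪d, u⟫ / ‖d‖²` this says
`Re (u / (u - v)) ≥ 1/2`. Dividing by `R` gives the claim.
-/

open scoped RealInnerProductSpace

theorem norm_sub_sq_le_two_mul_inner {E : Type*} [NormedAddCommGroup E] [InnerProductSpace ℝ E]
    {u v : E} (h : ‖v‖ ≤ ‖u‖) : ‖u - v‖ ^ 2 ≤ 2 * ⟪u, u - v⟫ := by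
  have hsq : ‖v‖ ^ 2 ≤ ‖u‖ ^ 2 := pow_le_pow_left₀ (norm_nonneg v) h 2
  rw [norm_sub_sq_real, inner_sub_right, real_inner_self_eq_norm_sq]
  linarith

theorem Complex.re_div_eq_inner_div_norm_sq (u d : ℂ) : (u / d).re = ⟪d, u⟫ / ‖d‖ ^ 2 := by
  rw [Complex.div_re, Complex.inner, ← Complex.normSq_eq_norm_sq]
  simp only [Complex.mul_re, Complex.conj_re, Complex.conj_im]
  ring

theorem Complex.one_half_le_re_div_sub_s5 {u v : ℂ} (h : ‖v‖ ≤ ‖u‖) (hne : u ≠ v) :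
    1 / 2 ≤ (u / (u - v)).re := by
  have hpos : 0 < ‖u - v‖ ^ 2 := by
    have := norm_pos_iff.mpr (sub_ne_zero.mpr hne)
    positivity
  rw [Complex.re_div_eq_inner_div_norm_sq, real_inner_comm, le_div_iff₀ hpos]
  linarith [norm_sub_sq_le_two_mul_inner h]

/-- Geometric core of Turán's lemma: each zero factor contributes at least
`1/(2R)` in the outer normal direction at a boundary point of the disk. -/
theorem turan_normal_direction (c : ℂ) (R : ℝ) (hR : 0 < R) (z w : ℂ)
    (hz : dist z c = R) (hw : w ∈ closedBall c R) (hwz : w ≠ z) :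
    1 / (2 * R) ≤ (((z - c) / (R : ℂ)) * (1 / (z - w))).re := by
  have hwc : ‖w - c‖ ≤ ‖z - c‖ := by
    rw [← dist_eq_norm, ← dist_eq_norm, hz]
    exact mem_closedBall.mp hw
  have hhalf : 1 / 2 ≤ ((z - c) / (z - w)).re := by
    simpa only [sub_sub_sub_cancel_right] using
      Complex.one_half_le_re_div_sub_s5 hwc (sub_left_injective.ne hwz.symm)
  have hrewrite : ((z - c) / (R : ℂ)) * (1 / (z - w)) = (z - c) / (z - w) / (R : ℂ) := by
    ring
  rw [hrewrite, Complex.div_ofReal_re, ← div_div]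
  exact div_le_div_of_nonneg_right hhalf hR.le
end

section
/- Let K ⊂ ℂ be a compact R-circular set, i.e., for every z ∈ ∂K there is a closed disk of radius R containing K with z on its boundary circle. Then for every polynomial p of degree n ≥ 1 with all roots in K, sup_{K} |p'| ≥ (n / (2R)) · sup_{K} |p|. -/
/-!
Let `z` be a point of `K` where `|p|` is maximal. By the maximum modulus principle it can be
chosen on `∂K`, so some disk `closedBall c R` containing `K` (hence all roots `w` of `p`) has `z`
on its boundary circle. Then `p'(z) / p(z) = ∑ 1 / (z - w)`, and each term satisfies
`Re ((z - c) / (z - w)) ≥ 1 / 2`, because `z - w` lies in the disk of radius `|z - c|` about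
`z - c`. Summing, `R |p'(z) / p(z)| ≥ n / 2`.
-/

open Polynomial Metric

/-- A compact set `K ⊆ ℂ` is `R`-circular if every boundary point lies on the
boundary circle of some closed disk of radius `R` containing `K`. -/
def RCircular (R : ℝ) (K : Set ℂ) : Prop :=
  ∀ z ∈ frontier K, ∃ c : ℂ, dist z c = R ∧ K ⊆ closedBall c R

-- `u` lies in the closed disk of radius `|a|` about `a`, i.e. `|u|² ≤ 2 Re (a ū)`.
theorem Complex.one_half_le_re_div_of_norm_sub_le {a u : ℂ} (hu : u ≠ 0)
    (h : ‖u - a‖ ≤ ‖a‖) : 1 / 2 ≤ (a / u).re := by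
  have hsq : normSq (u - a) ≤ normSq a := by
    simpa only [normSq_eq_norm_sq] using pow_le_pow_left₀ (norm_nonneg _) h 2
  rw [div_re, ← add_div, le_div_iff₀ (normSq_pos.2 hu)]
  simp only [normSq_apply, sub_re, sub_im] at hsq ⊢
  nlinarith

theorem Complex.card_div_two_le_re_sum_div {s : Multiset ℂ} {z c : ℂ}
    (hz : ∀ w ∈ s, w ≠ z) (hs : ∀ w ∈ s, ‖w - c‖ ≤ ‖z - c‖) :
    (s.card : ℝ) / 2 ≤ (s.map fun w => (z - c) / (z - w)).sum.re := by
  have hterm : ∀ x ∈ s.map fun w => ((z - c) / (z - w)).re, 1 / 2 ≤ x := by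
    simp only [Multiset.mem_map, forall_exists_index, and_imp, forall_apply_eq_imp_iff₂]
    intro w hw
    refine one_half_le_re_div_of_norm_sub_le (sub_ne_zero.2 (hz w hw).symm) ?_
    simpa only [sub_sub_sub_cancel_left, norm_sub_rev c w] using hs w hw
  have hsum := Multiset.card_nsmul_le_sum hterm
  rw [Multiset.card_map, nsmul_eq_mul] at hsum
  change _ ≤ reAddGroupHom _
  rw [map_multiset_sum, Multiset.map_map]
  exact (div_eq_mul_one_div _ _).trans_le hsum

theorem Polynomial.natDegree_div_mul_norm_eval_le_norm_eval_derivative (p : ℂ[X]) {z c : ℂ}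
    {R : ℝ} (hz : dist z c = R) (hroots : ∀ w ∈ p.roots, dist w c ≤ R) :
    p.natDegree / (2 * R) * ‖p.eval z‖ ≤ ‖p.derivative.eval z‖ := by
  by_cases hpz : p.eval z = 0
  · simp [hpz]
  set S := (p.roots.map fun w => 1 / (z - w)).sum
  have hderiv : p.derivative.eval z = p.eval z * S :=
    (IsAlgClosed.splits p).eval_derivative_eq_eval_mul_sum hpz
  have hre : (p.natDegree : ℝ) / 2 ≤ ((z - c) * S).re := by
    rw [← IsAlgClosed.card_roots_eq_natDegree, ← Multiset.sum_map_mul_left]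
    simp only [mul_one_div]
    refine Complex.card_div_two_le_re_sum_div (fun w hw hwz => hpz ?_) fun w hw => ?_
    · exact hwz ▸ isRoot_of_mem_roots hw
    · simpa only [← dist_eq_norm, hz] using hroots w hw
  have hnorm : ‖(z - c) * S‖ = R * ‖S‖ := by rw [norm_mul, ← dist_eq_norm, hz]
  have hS : p.natDegree / (2 * R) ≤ ‖S‖ := by
    rcases (hz ▸ dist_nonneg : 0 ≤ R).eq_or_lt with rfl | hR
    · simp
    rw [div_le_iff₀ (by positivity)]
    linarith [Complex.re_le_norm ((z - c) * S)]
  rw [hderiv, norm_mul, mul_comm ‖_‖]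
  gcongr

theorem turan_circular_general (R : ℝ) (K : Set ℂ) (hK : IsCompact K)
    (hcirc : RCircular R K)
    (n : ℕ) (p : Polynomial ℂ) (hdeg : p.natDegree = n)
    (hroots : ∀ w : ℂ, p.IsRoot w → w ∈ K) :
    ((n : ℝ) / (2 * R)) * sSup ((fun z => ‖p.eval z‖) '' K)
      ≤ sSup ((fun z => ‖(Polynomial.derivative p).eval z‖) '' K) := by
  subst hdeg
  rcases K.eq_empty_or_nonempty with rfl | hne
  · simp
  obtain ⟨z, hz, hmax⟩ :=
    Complex.exists_mem_frontier_isMaxOn_norm hK.isBounded hne p.differentiable.diffContOnCl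
  rw [hK.isClosed.closure_eq] at hmax
  have hzK : z ∈ K := hK.isClosed.frontier_subset hz
  obtain ⟨c, hzc, hKc⟩ := hcirc z hz
  rw [IsGreatest.csSup_eq
    ⟨Set.mem_image_of_mem _ hzK, Set.forall_mem_image.2 fun x hx => hmax hx⟩]
  calc _ ≤ ‖p.derivative.eval z‖ :=
        p.natDegree_div_mul_norm_eval_le_norm_eval_derivative hzc
          fun w hw => hKc (hroots w (isRoot_of_mem_roots hw))
    _ ≤ _ := le_csSup (hK.image (by fun_prop)).bddAbove ⟨z, hzK, rfl⟩

/-- Erőd; Levenberg–Poletsky: Turán's inequality for `R`-circular compact sets. -/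
theorem turan_circular (R : ℝ) (hR : 0 < R) (K : Set ℂ) (hK : IsCompact K)
    (hcirc : RCircular R K)
    (n : ℕ) (hn : 1 ≤ n) (p : Polynomial ℂ) (hdeg : p.natDegree = n)
    (hroots : ∀ w : ℂ, p.IsRoot w → w ∈ K) :
    ((n : ℝ) / (2 * R)) * sSup ((fun z => ‖p.eval z‖) '' K)
      ≤ sSup ((fun z => ‖(Polynomial.derivative p).eval z‖) '' K) :=
  turan_circular_general R K hK hcirc n p hdeg hroots
end

section
/- Let J = [u, v] ⊂ ℂ be a segment with u ≠ v, and let w₁, …, w_k be arbitrary complex numbers. Then max_{z ∈ J} |∏_{j=1}^k (z − w_j)| ≥ 2 (|u − v| / 4)^k. -/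
/-!
A monic real `P` of degree `n` with `2 ^ (n - 1) * |P| < 1` on `[-1, 1]` would make
`2 ^ (n - 1) * P` a polynomial bounded by `1` there with the leading coefficient of the Chebyshev
polynomial `T n`; by the equality case of Chebyshev's extremal bound it would be `T n`, which
takes the value `1` at `1`. For complex zeros, `|x - c| ≥ |x - re c|` for real `x` reduces to real
zeros, and the affine map `x ↦ u + (x + 1) / 2 • (v - u)` carries `[-1, 1]` onto `[u, v]`, scaling
the product by `(|u - v| / 2) ^ k`.
-/

open Polynomial Set

theorem Polynomial.Monic.exists_one_le_two_pow_mul_abs_eval {P : ℝ[X]} (hP : P.Monic) :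
    ∃ x ∈ Icc (-1 : ℝ) 1, 1 ≤ 2 ^ (P.natDegree - 1) * |P.eval x| := by
  by_contra! hsmall
  set n := P.natDegree
  set Q := C ((2 : ℝ) ^ (n - 1)) * P
  have hQ_eval (x : ℝ) : Q.eval x = 2 ^ (n - 1) * P.eval x := eval_C_mul
  have hQ_bound : ∀ x ∈ Icc (-1 : ℝ) 1, |Q.eval x| < 1 := fun x hx => by
    rw [hQ_eval, abs_mul, abs_of_pos (by positivity)]
    exact hsmall x hx
  have hQ_degree : Q.degree ≤ n := by
    rw [degree_C_mul (by positivity)]; exact degree_le_natDegree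
  have hQ_eq_T : Q = Chebyshev.T ℝ n :=
    (Chebyshev.coeff_eq_iff_of_forall_abs_le_one hQ_degree fun x hx => (hQ_bound x hx).le).1
      (by rw [coeff_C_mul, hP.coeff_natDegree, mul_one])
  have := hQ_bound 1 (right_mem_Icc.2 (by norm_num))
  rw [hQ_eq_T, Chebyshev.T_eval_one, abs_one] at this
  exact this.false

variable {ι : Type*} [Fintype ι]

theorem exists_one_le_two_pow_mul_abs_prod_sub (c : ι → ℝ) :
    ∃ x ∈ Icc (-1 : ℝ) 1, 1 ≤ 2 ^ (Fintype.card ι - 1) * |∏ i, (x - c i)| := by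
  have hP := monic_prod_X_sub_C c Finset.univ
  rw [← Finset.card_univ, ← natDegree_finsetProd_X_sub_C_eq_card Finset.univ c]
  simpa [eval_prod] using hP.exists_one_le_two_pow_mul_abs_eval

theorem exists_one_le_two_pow_mul_norm_prod_sub (c : ι → ℂ) :
    ∃ x ∈ Icc (-1 : ℝ) 1, 1 ≤ 2 ^ (Fintype.card ι - 1) * ‖∏ i, ((x : ℂ) - c i)‖ := by
  obtain ⟨x, hx, hbound⟩ := exists_one_le_two_pow_mul_abs_prod_sub fun i => (c i).re
  refine ⟨x, hx, hbound.trans ?_⟩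
  gcongr
  rw [Finset.abs_prod, norm_prod]
  gcongr with i
  simpa using Complex.abs_re_le_norm ((x : ℂ) - c i)

theorem exists_mem_segment_two_mul_le_norm_prod_sub [Nonempty ι] {u v : ℂ} (huv : u ≠ v)
    (w : ι → ℂ) :
    ∃ z ∈ segment ℝ u v, 2 * (dist u v / 4) ^ Fintype.card ι ≤ ‖∏ i, (z - w i)‖ := by
  set n := Fintype.card ι
  have hvu : v - u ≠ 0 := sub_ne_zero.2 huv.symm
  set c : ι → ℂ := fun i => 2 * (w i - u) / (v - u) - 1
  obtain ⟨x, hx, hbound⟩ := exists_one_le_two_pow_mul_norm_prod_sub c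
  refine ⟨u + ((x + 1) / 2 : ℝ) • (v - u), ?_, ?_⟩
  · rw [segment_eq_image']
    exact ⟨(x + 1) / 2, ⟨by linarith [hx.1], by linarith [hx.2]⟩, rfl⟩
  have hfactor (i : ι) : u + ((x + 1) / 2 : ℝ) • (v - u) - w i = (v - u) / 2 * (x - c i) := by
    simp only [c, Complex.real_smul]; push_cast; field_simp; ring
  have hnorm : ‖(v - u) / 2‖ = dist u v / 2 := by
    rw [norm_div, ← dist_eq_norm, dist_comm]; norm_num
  simp_rw [hfactor, Finset.prod_mul_distrib, Finset.prod_const, Finset.card_univ, norm_mul,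
    norm_pow, hnorm]
  have hpow : 2 * (dist u v / 4) ^ n * 2 ^ (n - 1) = (dist u v / 2) ^ n := by
    rw [mul_right_comm, mul_pow_sub_one Fintype.card_ne_zero, div_pow, div_pow,
      show (4 : ℝ) ^ n = 2 ^ n * 2 ^ n by rw [← mul_pow]; norm_num]
    field_simp
    ring
  calc 2 * (dist u v / 4) ^ n
      ≤ 2 * (dist u v / 4) ^ n * (2 ^ (n - 1) * ‖∏ i, ((x : ℂ) - c i)‖) :=
        le_mul_of_one_le_right (by positivity) hbound
    _ = _ := by rw [← mul_assoc, hpow]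

/-- Chebyshev's lower bound: a monic polynomial of degree `k` has sup norm at
least `2(|J|/4)^k` on any segment `J = [u,v]`, wherever its zeros lie. -/
theorem chebyshev_segment (u v : ℂ) (huv : u ≠ v) (k : ℕ) (hk : 1 ≤ k)
    (w : Fin k → ℂ) :
    2 * (dist u v / 4) ^ k
      ≤ sSup ((fun z => ‖∏ j : Fin k, (z - w j)‖) '' segment ℝ u v) := by
  have : Nonempty (Fin k) := ⟨⟨0, hk⟩⟩
  obtain ⟨z, hz, hbound⟩ := exists_mem_segment_two_mul_le_norm_prod_sub huv w
  have hcompact : IsCompact (segment ℝ u v) :=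
    convexHull_pair (𝕜 := ℝ) u v ▸ (toFinite _).isCompact_convexHull ℝ
  rw [Fintype.card_fin] at hbound
  exact le_csSup_of_le (hcompact.bddAbove_image (by fun_prop)) ⟨z, hz, rfl⟩ hbound
end

section
/- Let E_b = {(x,y) ∈ ℝ² : x² + (y/b)² ≤ 1} with 0 < b ≤ 1, viewed as a subset of ℂ. Then for every polynomial p of degree n ≥ 1 with all roots in E_b, sup_{E_b} |p'| ≥ (b/2) n · sup_{E_b} |p|. -/
open Polynomial

/-!
Let `z₀` be a point of `E_b` where `|p|` attains its maximum; by the maximum modulus principle it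
can be taken on the boundary ellipse. There `p'(z₀) = p(z₀) · ∑ 1 / (z₀ - r)` over the roots `r`.
For the outer normal `ν` at `z₀`, every `r ∈ E_b` lies in the half-plane where
`Re (ν / (z₀ - r)) ≥ (b / 2) |ν|`; summing over the `n` roots gives `|p'(z₀)| ≥ (b / 2) n |p(z₀)|`.
-/

open Complex Set ComplexConjugate

def ellipse (b : ℝ) : Set ℂ := {z | z.re ^ 2 + (z.im / b) ^ 2 ≤ 1}

/-- Half the gradient of `re² + (im / b)²`, an outer normal to `ellipse b` on its boundary. -/
noncomputable def ellipseNormal (b : ℝ) (z : ℂ) : ℂ := ⟨z.re, z.im / b ^ 2⟩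

section Ellipse

variable {b : ℝ} {z w : ℂ}

theorem zero_mem_ellipse (b : ℝ) : (0 : ℂ) ∈ ellipse b := by
  simp [ellipse]

theorem isClosed_ellipse (b : ℝ) : IsClosed (ellipse b) :=
  isClosed_le (by fun_prop) continuous_const

theorem isBounded_ellipse (hb : 0 < b) : Bornology.IsBounded (ellipse b) := by
  refine (Metric.isBounded_closedBall (x := 0) (r := 1 + b)).subset fun z hz => ?_
  have hre : |z.re| ≤ 1 :=
    abs_le_of_sq_le_sq (by nlinarith [sq_nonneg (z.im / b), hz.out]) zero_le_one
  have him : |z.im / b| ≤ 1 :=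
    abs_le_of_sq_le_sq (by nlinarith [sq_nonneg z.re, hz.out]) zero_le_one
  rw [abs_div, abs_of_pos hb, div_le_one hb] at him
  rw [mem_closedBall_zero_iff]
  linarith [norm_le_abs_re_add_abs_im z]

theorem isCompact_ellipse (hb : 0 < b) : IsCompact (ellipse b) :=
  Metric.isCompact_of_isClosed_isBounded (isClosed_ellipse b) (isBounded_ellipse hb)

theorem frontier_ellipse_subset (b : ℝ) :
    frontier (ellipse b) ⊆ {z | z.re ^ 2 + (z.im / b) ^ 2 = 1} :=
  frontier_le_subset_eq (by fun_prop) continuous_const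

theorem ellipseNormal_ne_zero (hz : z.re ^ 2 + (z.im / b) ^ 2 = 1) : ellipseNormal b z ≠ 0 := by
  intro h
  have hre : z.re = 0 := congrArg Complex.re h
  have him : z.im / b = 0 := by
    rcases div_eq_zero_iff.1 (congrArg Complex.im h) with h | h <;> simp_all
  simp [hre, him] at hz

theorem norm_ellipseNormal_le (hb : 0 < b) (hb1 : b ≤ 1) (hz : z ∈ ellipse b) :
    ‖ellipseNormal b z‖ ≤ 1 / b := by
  have hz : z.re ^ 2 + (z.im / b) ^ 2 ≤ 1 := hz
  have hre : z.re ^ 2 ≤ z.re ^ 2 / b ^ 2 :=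
    le_div_self (sq_nonneg _) (by positivity) (pow_le_one₀ hb.le hb1)
  rw [norm_def, normSq_apply, Real.sqrt_le_left (by positivity)]
  calc _ = z.re ^ 2 + (z.im / b) ^ 2 / b ^ 2 := by
        simp only [ellipseNormal]; ring
    _ ≤ (z.re ^ 2 + (z.im / b) ^ 2) / b ^ 2 := by rw [add_div]; linarith
    _ ≤ 1 / b ^ 2 := by gcongr
    _ = (1 / b) ^ 2 := by ring

theorem normSq_sub_le_two_mul_re_ellipseNormal_mul_conj (hb : 0 < b) (hb1 : b ≤ 1)
    (hz : z.re ^ 2 + (z.im / b) ^ 2 = 1) (hw : w ∈ ellipse b) :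
    normSq (z - w) ≤ 2 * (ellipseNormal b z * conj (z - w)).re := by
  -- In the coordinates `(re, im / b)` the ellipse is the unit disc, where the inequality is
  -- `|ζ - ω|² ≤ 2 Re (ζ conj (ζ - ω))` for `|ζ| = 1 ≥ |ω|`; going back multiplies the
  -- imaginary part of `z - w` by `b ≤ 1`, which only decreases the left side.
  have hw : w.re ^ 2 + (w.im / b) ^ 2 ≤ 1 := hw
  obtain ⟨Y, hY, hzY⟩ : ∃ Y, z.im / b = Y ∧ z.im = b * Y := ⟨_, rfl, by field_simp⟩
  obtain ⟨V, hV, hwV⟩ : ∃ V, w.im / b = V ∧ w.im = b * V := ⟨_, rfl, by field_simp⟩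
  simp only [normSq_apply, ellipseNormal, mul_re, conj_re, conj_im, sub_re, sub_im, hzY, hwV]
  rw [hY] at hz
  rw [hV] at hw
  field_simp
  nlinarith [sq_nonneg (Y - V), sq_nonneg (z.re - w.re),
    mul_nonneg (sub_nonneg.2 (pow_le_one₀ (n := 2) hb.le hb1)) (sq_nonneg (Y - V))]

theorem le_re_ellipseNormal_mul_inv_sub (hb : 0 < b) (hb1 : b ≤ 1)
    (hz : z.re ^ 2 + (z.im / b) ^ 2 = 1) (hw : w ∈ ellipse b) (hwz : w ≠ z) :
    b / 2 * ‖ellipseNormal b z‖ ≤ (ellipseNormal b z * (z - w)⁻¹).re := by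
  have hpos : 0 < normSq (z - w) := normSq_pos.2 (sub_ne_zero.2 hwz.symm)
  have hν : b / 2 * ‖ellipseNormal b z‖ ≤ 1 / 2 := by
    calc b / 2 * ‖ellipseNormal b z‖ ≤ b / 2 * (1 / b) := by
          gcongr; exact norm_ellipseNormal_le hb hb1 hz.le
      _ = 1 / 2 := by field_simp
  rw [inv_def, ← mul_assoc, re_mul_ofReal, le_mul_inv_iff₀ hpos]
  linarith [normSq_sub_le_two_mul_re_ellipseNormal_mul_conj hb hb1 hz hw,
    mul_le_mul_of_nonneg_right hν hpos.le]

end Ellipse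

namespace Polynomial

theorem natDegree_mul_le_re_mul_sum_roots {p : ℂ[X]} {z ν : ℂ} {c : ℝ}
    (h : ∀ r ∈ p.roots, c * ‖ν‖ ≤ (ν * (z - r)⁻¹).re) :
    p.natDegree * (c * ‖ν‖) ≤ (ν * (p.roots.map fun r => 1 / (z - r)).sum).re := by
  have hre : (ν * (p.roots.map fun r => 1 / (z - r)).sum).re =
      (p.roots.map fun r => (ν * (z - r)⁻¹).re).sum := by
    rw [← Multiset.sum_map_mul_left, ← coe_reAddGroupHom, map_multiset_sum, Multiset.map_map]
    simp
  rw [hre, ← IsAlgClosed.card_roots_eq_natDegree, ← nsmul_eq_mul]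
  simpa using Multiset.card_nsmul_le_sum (s := p.roots.map fun r => (ν * (z - r)⁻¹).re)
    (Multiset.forall_mem_map_iff.2 h)

theorem mul_natDegree_mul_norm_eval_le_norm_eval_derivative {p : ℂ[X]} {z ν : ℂ} {c : ℝ}
    (hν : ν ≠ 0) (h : ∀ r ∈ p.roots, r ≠ z → c * ‖ν‖ ≤ (ν * (z - r)⁻¹).re) :
    c * p.natDegree * ‖p.eval z‖ ≤ ‖(derivative p).eval z‖ := by
  rcases eq_or_ne (p.eval z) 0 with hpz | hpz
  · simp [hpz]
  have hroots : ∀ r ∈ p.roots, c * ‖ν‖ ≤ (ν * (z - r)⁻¹).re := fun r hr =>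
    h r hr fun hrz => hpz (hrz ▸ isRoot_of_mem_roots hr)
  set S := (p.roots.map fun r => 1 / (z - r)).sum
  have hS : c * p.natDegree ≤ ‖S‖ := by
    refine le_of_mul_le_mul_left ?_ (norm_pos_iff.2 hν)
    calc ‖ν‖ * (c * p.natDegree) = p.natDegree * (c * ‖ν‖) := by ring
      _ ≤ (ν * S).re := natDegree_mul_le_re_mul_sum_roots hroots
      _ ≤ ‖ν * S‖ := re_le_norm _
      _ = ‖ν‖ * ‖S‖ := norm_mul _ _
  rw [(IsAlgClosed.splits p).eval_derivative_eq_eval_mul_sum hpz, norm_mul, mul_comm (‖_‖)]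
  gcongr

end Polynomial

theorem turan_ellipse_general (b : ℝ) (hb : 0 < b) (hb1 : b ≤ 1)
    (n : ℕ) (p : Polynomial ℂ) (hdeg : p.natDegree = n)
    (hroots : ∀ w : ℂ, p.IsRoot w → w ∈ {z : ℂ | z.re ^ 2 + (z.im / b) ^ 2 ≤ 1}) :
    (b / 2) * n * sSup ((fun z => ‖p.eval z‖) '' {z : ℂ | z.re ^ 2 + (z.im / b) ^ 2 ≤ 1})
      ≤ sSup ((fun z => ‖(Polynomial.derivative p).eval z‖)
          '' {z : ℂ | z.re ^ 2 + (z.im / b) ^ 2 ≤ 1}) := by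
  change b / 2 * n * sSup ((fun z => ‖p.eval z‖) '' ellipse b)
    ≤ sSup ((fun z => ‖(derivative p).eval z‖) '' ellipse b)
  obtain ⟨z₀, hfr, hmax⟩ := exists_mem_frontier_isMaxOn_norm (isBounded_ellipse hb)
    ⟨0, zero_mem_ellipse b⟩ p.differentiable.diffContOnCl
  rw [(isClosed_ellipse b).closure_eq] at hmax
  have hz₀ : z₀ ∈ ellipse b := (isClosed_ellipse b).frontier_subset hfr
  have hbdry := frontier_ellipse_subset b hfr
  have hsup : sSup ((fun z => ‖p.eval z‖) '' ellipse b) = ‖p.eval z₀‖ :=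
    IsGreatest.csSup_eq ⟨mem_image_of_mem _ hz₀, forall_mem_image.2 hmax⟩
  have hbdd : BddAbove ((fun z => ‖(derivative p).eval z‖) '' ellipse b) :=
    ((isCompact_ellipse hb).image (by fun_prop)).bddAbove
  rw [hsup, ← hdeg]
  refine le_trans ?_ (le_csSup hbdd (mem_image_of_mem _ hz₀))
  exact mul_natDegree_mul_norm_eval_le_norm_eval_derivative (ellipseNormal_ne_zero hbdry)
    fun r hr hrz => le_re_ellipseNormal_mul_inv_sub hb hb1 hbdry
      (hroots r (isRoot_of_mem_roots hr)) hrz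

/-- Erőd's ellipse theorem: Turán's inequality with constant `b/2` for the
ellipse domain `E_b` with semi-axes `1` and `b`. -/
theorem turan_ellipse (b : ℝ) (hb : 0 < b) (hb1 : b ≤ 1)
    (n : ℕ) (hn : 1 ≤ n) (p : Polynomial ℂ) (hdeg : p.natDegree = n)
    (hroots : ∀ w : ℂ, p.IsRoot w → w ∈ {z : ℂ | z.re ^ 2 + (z.im / b) ^ 2 ≤ 1}) :
    (b / 2) * n * sSup ((fun z => ‖p.eval z‖) '' {z : ℂ | z.re ^ 2 + (z.im / b) ^ 2 ≤ 1})
      ≤ sSup ((fun z => ‖(Polynomial.derivative p).eval z‖)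
          '' {z : ℂ | z.re ^ 2 + (z.im / b) ^ 2 ≤ 1}) :=
  turan_ellipse_general b hb hb1 n p hdeg hroots
end

section
/- Let Γ^p = {(x,y) : |x|^p + |y|^p = 1} with 1 < p < 2, parametrized over the positive quadrant by y(x) = (1 − x^p)^{1/p}. Then the minimum of the curvature over the curve equals (p − 1) · 2^{1/p − 1/2}, attained at the point x = y = 2^{−1/p}. -/
/-- Curvature of the graph `y = (1 - x^p)^{1/p}` (the `ℓ_p` unit circle in the
positive quadrant), `1 < p < 2`. -/
noncomputable def lpCurvature (p x : ℝ) : ℝ :=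
  (p - 1) * x ^ (p - 2) * (1 - x ^ p) ^ (1 / p - 2) /
    (1 + x ^ (2 * p - 2) * (1 - x ^ p) ^ (2 / p - 2)) ^ ((3 : ℝ) / 2)

/-!
Put `a = x^p`, `b = y^p = 1 - a` and `θ = 2 - 2/p ∈ (0, 1)`. Then the curvature is
`(p - 1) (ab)^(θ-1) / (a^θ + b^θ)^(3/2)`. Since `θ - 1 < 0`, the numerator is smallest when `ab`
is largest, and by concavity of `t ↦ t^θ` the denominator is largest when `a = b`; both happen
at `a = b = 1/2`.
-/

open Real

noncomputable def normalizedCurvature (θ a b : ℝ) : ℝ :=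
  (a * b) ^ (θ - 1) / (a ^ θ + b ^ θ) ^ ((3 : ℝ) / 2)

lemma rpow_add_rpow_le_two_mul_rpow_add_div_two {θ a b : ℝ} (hθ0 : 0 ≤ θ) (hθ1 : θ ≤ 1)
    (ha : 0 ≤ a) (hb : 0 ≤ b) : a ^ θ + b ^ θ ≤ 2 * ((a + b) / 2) ^ θ := by
  have hmid := (concaveOn_rpow hθ0 hθ1).2 ha hb (by norm_num : (0 : ℝ) ≤ 1 / 2)
    (by norm_num : (0 : ℝ) ≤ 1 / 2) (by norm_num)
  simp only [smul_eq_mul] at hmid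
  rw [show (a + b) / 2 = 1 / 2 * a + 1 / 2 * b by ring]
  linarith

lemma lpCurvature_eq_mul_normalizedCurvature {p x : ℝ} (hp : 0 < p) (hx0 : 0 < x)
    (hx1 : x < 1) :
    lpCurvature p x = (p - 1) * normalizedCurvature (2 - 2 / p) (x ^ p) (1 - x ^ p) := by
  set θ := 2 - 2 / p with hθ
  have ha : 0 < x ^ p := rpow_pos_of_pos hx0 p
  have hb : 0 < 1 - x ^ p := sub_pos.2 (rpow_lt_one hx0.le hx1 hp)
  have hx_pow : x ^ (p - 2) = (x ^ p) ^ (θ - 1) := by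
    rw [← rpow_mul hx0.le, hθ]; congr 1; field_simp; ring
  have hx_pow' : x ^ (2 * p - 2) = (x ^ p) ^ θ := by
    rw [← rpow_mul hx0.le, hθ]; congr 1; field_simp
  have hy_pow : (1 - x ^ p) ^ (1 / p - 2)
      = (1 - x ^ p) ^ (θ - 1) / ((1 - x ^ p) ^ θ) ^ ((3 : ℝ) / 2) := by
    rw [← rpow_mul hb.le, ← rpow_sub hb]; congr 1; ring
  have hy_pow' : (1 - x ^ p) ^ (2 / p - 2) = ((1 - x ^ p) ^ θ)⁻¹ := by
    rw [← rpow_neg hb.le]; congr 1; ring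
  rw [lpCurvature, normalizedCurvature, hx_pow, hx_pow', hy_pow, hy_pow', mul_rpow ha.le hb.le]
  generalize x ^ p = a at *
  generalize 1 - a = b at *
  have hsum : 1 + a ^ θ * (b ^ θ)⁻¹ = (a ^ θ + b ^ θ) / b ^ θ := by
    field_simp [(rpow_pos_of_pos hb θ).ne']
    ring
  rw [hsum, div_rpow (by positivity) (by positivity)]
  field_simp

lemma normalizedCurvature_half_le {θ a b : ℝ} (hθ0 : 0 ≤ θ) (hθ1 : θ ≤ 1) (ha : 0 < a)
    (hb : 0 < b) (hab : a + b = 1) :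
    normalizedCurvature θ (1 / 2) (1 / 2) ≤ normalizedCurvature θ a b := by
  have hprod : a * b ≤ 1 / 2 * (1 / 2) := by nlinarith [sq_nonneg (a - b)]
  have hsum : a ^ θ + b ^ θ ≤ (1 / 2) ^ θ + (1 / 2) ^ θ := by
    have := rpow_add_rpow_le_two_mul_rpow_add_div_two hθ0 hθ1 ha.le hb.le
    rw [hab] at this
    linarith
  exact div_le_div₀ (by positivity) (rpow_le_rpow_of_nonpos (by positivity) hprod (by linarith))
    (by positivity) (rpow_le_rpow (by positivity) hsum (by norm_num))

lemma normalizedCurvature_half (θ : ℝ) :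
    normalizedCurvature θ (1 / 2) (1 / 2) = 2 ^ ((1 - θ) / 2) := by
  have hhalf : ∀ e : ℝ, (1 / 2 : ℝ) ^ e = 2 ^ (-e) := fun e => by
    rw [one_div, inv_rpow zero_le_two, rpow_neg zero_le_two]
  have hsum : (1 / 2 : ℝ) ^ θ + (1 / 2) ^ θ = 2 ^ (1 - θ) := by
    rw [hhalf, ← two_mul, sub_eq_add_neg, rpow_add two_pos, rpow_one]
  have hprod : (1 / 2 : ℝ) * (1 / 2) = 2 ^ (-2 : ℝ) := by
    rw [rpow_neg zero_le_two]; norm_num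
  rw [normalizedCurvature, hprod, hsum, ← rpow_mul zero_le_two, ← rpow_mul zero_le_two,
    ← rpow_sub two_pos]
  congr 1; ring

/-- For `1 < p < 2`, the minimum of the curvature of the `ℓ_p` unit circle is
`(p-1) 2^{1/p - 1/2}`, attained at `x = y = 2^{-1/p}`. -/
theorem lp_curvature_min (p : ℝ) (hp1 : 1 < p) (hp2 : p < 2) :
    (∀ x ∈ Set.Ioo (0 : ℝ) 1, (p - 1) * 2 ^ (1 / p - 1 / 2 : ℝ) ≤ lpCurvature p x) ∧
    lpCurvature p ((2 : ℝ) ^ (-(1 / p) : ℝ)) = (p - 1) * 2 ^ (1 / p - 1 / 2 : ℝ) := by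
  have hp0 : 0 < p := by linarith
  have hθ0 : 0 ≤ 2 - 2 / p := by
    have : 2 / p ≤ 2 := by rw [div_le_iff₀ hp0]; linarith
    linarith
  have hθ1 : 2 - 2 / p ≤ 1 := by
    have : 1 ≤ 2 / p := by rw [le_div_iff₀ hp0]; linarith
    linarith
  have hmin : (p - 1) * (2 : ℝ) ^ (1 / p - 1 / 2 : ℝ)
      = (p - 1) * normalizedCurvature (2 - 2 / p) (1 / 2) (1 / 2) := by
    rw [normalizedCurvature_half]; congr 2; ring
  refine ⟨fun x ⟨hx0, hx1⟩ => ?_, ?_⟩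
  · rw [hmin, lpCurvature_eq_mul_normalizedCurvature hp0 hx0 hx1]
    exact mul_le_mul_of_nonneg_left (normalizedCurvature_half_le hθ0 hθ1
      (rpow_pos_of_pos hx0 p) (sub_pos.2 (rpow_lt_one hx0.le hx1 hp0)) (by ring)) (by linarith)
  · have hx_pow : ((2 : ℝ) ^ (-(1 / p))) ^ p = 1 / 2 := by
      rw [← rpow_mul zero_le_two, neg_mul, one_div_mul_cancel hp0.ne', rpow_neg_one, one_div]
    rw [hmin, lpCurvature_eq_mul_normalizedCurvature hp0 (rpow_pos_of_pos two_pos _)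
      (rpow_lt_one_of_one_lt_of_neg one_lt_two (by simpa using hp0)), hx_pow]
    norm_num
end

section
/- For 1 < p < 2, 0 < b ≤ 1, and x ∈ (0,1), the curvature κ(x) = (p−1) b x^{p−2}(1−x^p)^{1/p−2} / (1 + b² x^{2p−2}(1−x^p)^{2/p−2})^{3/2} of the curve y = b(1−x^p)^{1/p} satisfies κ(x) ≥ (p−1) b · 2^{1/p − 1/2}. -/
/-!
Put `ξ = x ^ p` and `β = 2 / p - 1 ∈ [0, 1]`. Factoring `(1 - ξ) ^ (β - 1)` out of the base of the
denominator gives `(p - 1) b / κ = (ξ (1 - ξ)) ^ β ((1 - ξ) ^ (1 - β) + b² ξ ^ (1 - β)) ^ (3/2)`.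
By AM–GM `ξ (1 - ξ) ≤ 1/4`, and by concavity of `t ↦ t ^ (1 - β)` together with `b² ≤ 1` the
second base is at most `2 ^ β`; hence `(p - 1) b / κ ≤ 2 ^ (-2β) 2 ^ (3β/2) = 2 ^ (1/2 - 1/p)`.
-/

open Real

lemma rpow_add_rpow_le_two_rpow_mul_add_rpow {s a b : ℝ} (hs₀ : 0 ≤ s) (hs₁ : s ≤ 1)
    (ha : 0 ≤ a) (hb : 0 ≤ b) : a ^ s + b ^ s ≤ 2 ^ (1 - s) * (a + b) ^ s := by
  have hmid := (concaveOn_rpow hs₀ hs₁).2 (Set.mem_Ici.2 ha) (Set.mem_Ici.2 hb)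
    (by norm_num : (0 : ℝ) ≤ 1 / 2) (by norm_num : (0 : ℝ) ≤ 1 / 2) (by norm_num)
  simp only [smul_eq_mul, ← mul_add] at hmid
  rw [mul_rpow (by norm_num) (by positivity), div_rpow zero_le_one zero_le_two, one_rpow] at hmid
  rw [rpow_sub zero_lt_two, rpow_one]
  calc a ^ s + b ^ s = 2 * (1 / 2 * (a ^ s + b ^ s)) := by ring
    _ ≤ 2 * (1 / 2 ^ s * (a + b) ^ s) := by gcongr
    _ = 2 / 2 ^ s * (a + b) ^ s := by ring

lemma mul_one_sub_rpow_le_two_rpow {ξ β : ℝ} (hβ : 0 ≤ β) (hξ₀ : 0 ≤ ξ) (hξ₁ : ξ ≤ 1) :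
    (ξ * (1 - ξ)) ^ β ≤ 2 ^ (-2 * β) := by
  rw [rpow_mul zero_le_two, rpow_neg zero_le_two, rpow_two, ← one_div]
  gcongr
  nlinarith [sq_nonneg (2 * ξ - 1)]

lemma lpEllipse_scaled_inv_curvature_le {ξ β b : ℝ} (hβ₀ : 0 ≤ β) (hβ₁ : β ≤ 1)
    (hξ₀ : 0 ≤ ξ) (hξ₁ : ξ ≤ 1) (hb : b ^ 2 ≤ 1) :
    (ξ * (1 - ξ)) ^ β * ((1 - ξ) ^ (1 - β) + b ^ 2 * ξ ^ (1 - β)) ^ ((3 : ℝ) / 2)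
      ≤ 2 ^ (-β / 2) := by
  have hsum : (1 - ξ) ^ (1 - β) + b ^ 2 * ξ ^ (1 - β) ≤ 2 ^ β := by
    have hmean := rpow_add_rpow_le_two_rpow_mul_add_rpow (a := 1 - ξ) (b := ξ)
      (sub_nonneg.2 hβ₁) (sub_le_self 1 hβ₀) (sub_nonneg.2 hξ₁) hξ₀
    rw [sub_sub_cancel, sub_add_cancel, one_rpow, mul_one] at hmean
    have : b ^ 2 * ξ ^ (1 - β) ≤ ξ ^ (1 - β) :=
      mul_le_of_le_one_left (by positivity) hb
    linarith
  calc (ξ * (1 - ξ)) ^ β * ((1 - ξ) ^ (1 - β) + b ^ 2 * ξ ^ (1 - β)) ^ ((3 : ℝ) / 2)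
      ≤ 2 ^ (-2 * β) * ((2 : ℝ) ^ β) ^ ((3 : ℝ) / 2) := by
        have : 0 ≤ 1 - ξ := sub_nonneg.2 hξ₁
        gcongr
        exact mul_one_sub_rpow_le_two_rpow hβ₀ hξ₀ hξ₁
    _ = 2 ^ (-β / 2) := by
        rw [← rpow_mul zero_le_two, ← rpow_add zero_lt_two]
        ring_nf

lemma lpEllipse_curvature_eq_inv {ξ c β b : ℝ} (hξ : 0 < ξ) (hc : 0 < c) :
    ξ ^ (-β) * c ^ ((β - 3) / 2) / (1 + b ^ 2 * ξ ^ (1 - β) * c ^ (β - 1)) ^ ((3 : ℝ) / 2)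
      = ((ξ * c) ^ β * (c ^ (1 - β) + b ^ 2 * ξ ^ (1 - β)) ^ ((3 : ℝ) / 2))⁻¹ := by
  have hfactor : 1 + b ^ 2 * ξ ^ (1 - β) * c ^ (β - 1)
      = c ^ (β - 1) * (c ^ (1 - β) + b ^ 2 * ξ ^ (1 - β)) := by
    rw [mul_add, ← rpow_add hc, sub_add_sub_cancel', sub_self, rpow_zero]
    ring
  have hc_pow : c ^ ((β - 1) * (3 / 2)) = c ^ ((β - 3) / 2) * c ^ β := by
    rw [← rpow_add hc]
    ring_nf
  rw [hfactor, mul_rpow (by positivity) (by positivity), ← rpow_mul hc.le, hc_pow,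
    mul_rpow hξ.le hc.le, rpow_neg hξ.le]
  have : 0 < c ^ ((β - 3) / 2) := by positivity
  field_simp

/-- Curvature lower bound for the `ℓ_p`-ellipse `y = b(1-x^p)^{1/p}`:
`κ(x) ≥ (p-1) b 2^{1/p - 1/2}` for `1 < p < 2` and `0 < b ≤ 1`. -/
theorem lp_ellipse_curvature_lower (p b x : ℝ) (hp1 : 1 < p) (hp2 : p < 2)
    (hb : 0 < b) (hb1 : b ≤ 1) (hx : x ∈ Set.Ioo (0 : ℝ) 1) :
    (p - 1) * b * 2 ^ (1 / p - 1 / 2 : ℝ)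
      ≤ (p - 1) * b * x ^ (p - 2) * (1 - x ^ p) ^ (1 / p - 2) /
        (1 + b ^ 2 * x ^ (2 * p - 2) * (1 - x ^ p) ^ (2 / p - 2)) ^ ((3 : ℝ) / 2) := by
  obtain ⟨hx₀, hx₁⟩ := hx
  have hp₀ : 0 < p := by linarith
  set β := 2 / p - 1 with hβ
  have hβ₀ : 0 ≤ β := by rw [hβ, sub_nonneg, le_div_iff₀ hp₀]; linarith
  have hβ₁ : β ≤ 1 := by rw [hβ, sub_le_iff_le_add, div_le_iff₀ hp₀]; linarith
  set ξ := x ^ p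
  have hξ₀ : 0 < ξ := rpow_pos_of_pos hx₀ p
  have hξ₁ : ξ < 1 := rpow_lt_one hx₀.le hx₁ hp₀
  have hx_pow (r : ℝ) : x ^ r = ξ ^ (r / p) := by
    rw [← rpow_mul hx₀.le, mul_div_cancel₀ _ hp₀.ne']
  set Q := (ξ * (1 - ξ)) ^ β * ((1 - ξ) ^ (1 - β) + b ^ 2 * ξ ^ (1 - β)) ^ ((3 : ℝ) / 2)
  have hQ : Q ≤ 2 ^ (-β / 2) :=
    lpEllipse_scaled_inv_curvature_le hβ₀ hβ₁ hξ₀.le hξ₁.le (pow_le_one₀ hb.le hb1)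
  have hκ : x ^ (p - 2) * (1 - ξ) ^ (1 / p - 2)
      / (1 + b ^ 2 * x ^ (2 * p - 2) * (1 - ξ) ^ (2 / p - 2)) ^ ((3 : ℝ) / 2) = Q⁻¹ := by
    have e₁ : (p - 2) / p = -β := by rw [hβ]; field_simp; ring
    have e₂ : (2 * p - 2) / p = 1 - β := by rw [hβ]; field_simp; ring
    have e₃ : 1 / p - 2 = (β - 3) / 2 := by rw [hβ]; ring
    have e₄ : 2 / p - 2 = β - 1 := by rw [hβ]; ring
    rw [hx_pow, hx_pow, e₁, e₂, e₃, e₄]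
    exact lpEllipse_curvature_eq_inv hξ₀ (sub_pos.2 hξ₁)
  calc (p - 1) * b * 2 ^ (1 / p - 1 / 2 : ℝ) = (p - 1) * b * (2 ^ (-β / 2))⁻¹ := by
        rw [← rpow_neg zero_le_two, hβ]; ring_nf
    _ ≤ (p - 1) * b * Q⁻¹ := by
        have : 0 < Q := by positivity
        gcongr
    _ = _ := by rw [← hκ]; ring
end

section
/- Let K ⊂ ℂ be compact with all roots of the degree-n polynomial p contained in K, and suppose the sup norm ‖p‖_K is attained at ζ ∈ K. If there is a closed disk D_R of radius R with ζ ∈ ∂D_R and K ⊆ D_R, then ‖p'‖_K ≥ |p'(ζ)| ≥ (n/(2R)) ‖p‖_K. In particular, to prove Turán-type inequalities it suffices to verify the disk condition at a single norm-attaining boundary point. -/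
open Polynomial Metric

/-!
At a point `ζ` where `p(ζ) ≠ 0`, `p'(ζ)/p(ζ) = ∑ 1/(ζ - r)` over the roots `r` of `p`. When `ζ`
lies on the boundary circle of a disk of centre `c` containing the roots, each term
`(ζ - c)/(ζ - r)` has real part at least `1/2`, so `|ζ - c| · |p'(ζ)/p(ζ)| ≥ n/2`. At a
norm-attaining point this is the Turán bound, and `|p'(ζ)| ≤ sup_K |p'|` is trivial.
-/

lemma one_half_le_re_div_sub_of_dist_le_s19 {ζ c r : ℂ} (hrc : dist r c ≤ dist ζ c) (hr : r ≠ ζ) :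
    1 / 2 ≤ ((ζ - c) / (ζ - r)).re := by
  have hw : 0 < Complex.normSq (ζ - r) := Complex.normSq_pos.mpr (sub_ne_zero.mpr hr.symm)
  -- `|r - c| ≤ |ζ - c|` expands to `|ζ - r|² ≤ 2 Re((ζ - c) · conj (ζ - r))`
  have hsq : Complex.normSq (r - c) ≤ Complex.normSq (ζ - c) := by
    rw [Complex.dist_eq, Complex.dist_eq] at hrc
    simpa only [Complex.normSq_eq_norm_sq] using pow_le_pow_left₀ (norm_nonneg _) hrc 2
  rw [Complex.div_re, ← add_div, le_div_iff₀ hw]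
  simp only [Complex.normSq_apply, Complex.sub_re, Complex.sub_im] at hsq hw ⊢
  nlinarith

lemma natDegree_mul_norm_eval_le_of_dist_roots_le (p : ℂ[X]) {ζ c : ℂ}
    (hroots : ∀ r ∈ p.roots, dist r c ≤ dist ζ c) :
    p.natDegree * ‖p.eval ζ‖ ≤ 2 * dist ζ c * ‖p.derivative.eval ζ‖ := by
  by_cases hpζ : p.eval ζ = 0
  · simp only [hpζ, norm_zero, mul_zero]; positivity
  have hsplit : p.Splits := IsAlgClosed.splits p
  set S := (p.roots.map fun r ↦ 1 / (ζ - r)).sum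
  have hre : ((ζ - c) * S).re = (p.roots.map fun r ↦ ((ζ - c) / (ζ - r)).re).sum := by
    rw [← Multiset.sum_map_mul_left, ← Complex.coe_reAddGroupHom, map_multiset_sum,
      Multiset.map_map]
    simp only [Function.comp_def, mul_one_div]
  have hlow : (p.natDegree : ℝ) / 2 ≤ ((ζ - c) * S).re := by
    have hterm : ∀ x ∈ p.roots.map fun r ↦ ((ζ - c) / (ζ - r)).re, 1 / 2 ≤ x := by
      intro x hx
      obtain ⟨r, hr, rfl⟩ := Multiset.mem_map.mp hx
      refine one_half_le_re_div_sub_of_dist_le_s19 (hroots r hr) ?_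
      rintro rfl
      exact hpζ (isRoot_of_mem_roots hr)
    have := Multiset.card_nsmul_le_sum hterm
    rwa [Multiset.card_map, ← hsplit.natDegree_eq_card_roots, nsmul_eq_mul, mul_one_div, ← hre]
      at this
  calc (p.natDegree : ℝ) * ‖p.eval ζ‖ = 2 * (p.natDegree / 2) * ‖p.eval ζ‖ := by ring
    _ ≤ 2 * ‖(ζ - c) * S‖ * ‖p.eval ζ‖ := by
      gcongr; exact hlow.trans (Complex.re_le_norm _)
    _ = 2 * dist ζ c * ‖p.derivative.eval ζ‖ := by
      rw [hsplit.eval_derivative_eq_eval_mul_sum hpζ, norm_mul, norm_mul, Complex.dist_eq]; ring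

theorem turan_at_norm_attaining_point_general (K : Set ℂ)
    (n : ℕ) (p : Polynomial ℂ) (hdeg : p.natDegree = n)
    (hroots : ∀ w : ℂ, p.IsRoot w → w ∈ K)
    (ζ : ℂ) (hζ : ζ ∈ K)
    (hmax : ∀ z ∈ K, ‖p.eval z‖ ≤ ‖p.eval ζ‖)
    (c : ℂ) (R : ℝ) (hζc : dist ζ c = R) (hKD : K ⊆ closedBall c R) :
    ((n : ℝ) / (2 * R)) * sSup ((fun z => ‖p.eval z‖) '' K)
        ≤ ‖(Polynomial.derivative p).eval ζ‖ ∧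
      ‖(Polynomial.derivative p).eval ζ‖
        ≤ sSup ((fun z => ‖(Polynomial.derivative p).eval z‖) '' K) := by
  have hsup : sSup ((fun z => ‖p.eval z‖) '' K) = ‖p.eval ζ‖ :=
    IsGreatest.csSup_eq ⟨⟨ζ, hζ, rfl⟩, by rintro _ ⟨z, hz, rfl⟩; exact hmax z hz⟩
  have hpointwise : n * ‖p.eval ζ‖ ≤ 2 * R * ‖p.derivative.eval ζ‖ := by
    rw [← hdeg, ← hζc]
    exact natDegree_mul_norm_eval_le_of_dist_roots_le p fun r hr ↦
      hζc ▸ mem_closedBall.mp (hKD (hroots r (isRoot_of_mem_roots hr)))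
  have hbdd : BddAbove ((fun z => ‖p.derivative.eval z‖) '' K) :=
    ((isCompact_closedBall c R).bddAbove_image
      (continuous_norm.comp p.derivative.continuous).continuousOn).mono (Set.image_mono hKD)
  refine ⟨?_, le_csSup hbdd ⟨ζ, hζ, rfl⟩⟩
  rw [hsup, div_mul_eq_mul_div]
  exact div_le_of_le_mul₀ (hζc ▸ by positivity) (norm_nonneg _) (by linarith)

/-- If the sup norm of `p` on `K` is attained at `ζ`, and `ζ` lies on the
boundary circle of a closed disk of radius `R` containing `K`, then
`sup_K |p'| ≥ |p'(ζ)| ≥ (n/(2R)) sup_K |p|`. -/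
theorem turan_at_norm_attaining_point (K : Set ℂ) (hK : IsCompact K)
    (n : ℕ) (hn : 1 ≤ n) (p : Polynomial ℂ) (hdeg : p.natDegree = n)
    (hroots : ∀ w : ℂ, p.IsRoot w → w ∈ K)
    (ζ : ℂ) (hζ : ζ ∈ K)
    (hmax : ∀ z ∈ K, ‖p.eval z‖ ≤ ‖p.eval ζ‖)
    (c : ℂ) (R : ℝ) (hR : 0 < R) (hζc : dist ζ c = R) (hKD : K ⊆ closedBall c R) :
    ((n : ℝ) / (2 * R)) * sSup ((fun z => ‖p.eval z‖) '' K)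
        ≤ ‖(Polynomial.derivative p).eval ζ‖ ∧
      ‖(Polynomial.derivative p).eval ζ‖
        ≤ sSup ((fun z => ‖(Polynomial.derivative p).eval z‖) '' K) :=
  turan_at_norm_attaining_point_general K n p hdeg hroots ζ hζ hmax c R hζc hKD
end
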